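/- Let V be an irreducible L-module of finite dimension over ℝ. If there exists an L-module endomorphism of V that is not a real scalar multiple of the identity, then V admits an L-invariant complex structure, i.e., an L-module endomorphism J of V with J ∘ J = −id_V; in particular, the dimension of V over ℝ is even. -/
import Mathlib

open Polynomial

/-- If `V` is an irreducible `L`-module of finite dimension over `ℝ` admitting an
`L`-module endomorphism that is not a real scalar multiple of the identity, then `V` admits an
`L`-invariant complex structure: an `L`-module endomorphism `J` with `J ∘ J = -id`; in
particular the dimension of `V` over `ℝ` is even. -/
theorem nonscalar_endomorphism_gives_complex_structure
    (L : Type*) [LieRing L] [LieAlgebra ℝ L]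
    (V : Type*) [AddCommGroup V] [Module ℝ V]
    [LieRingModule L V] [LieModule ℝ L V]
    [FiniteDimensional ℝ V]
    (hV_ne : Nontrivial V)
    (hirr : ∀ W : Submodule ℝ V, (∀ (X : L) (v : V), v ∈ W → ⁅X, v⁆ ∈ W) → W = ⊥ ∨ W = ⊤)
    (f : V →ₗ[ℝ] V)
    (hf : ∀ (X : L) (v : V), f ⁅X, v⁆ = ⁅X, f v⁆)
    (hf_nonscalar : ∀ c : ℝ, f ≠ c • LinearMap.id) :
    (∃ J : V →ₗ[ℝ] V, (∀ (X : L) (v : V), J ⁅X, v⁆ = ⁅X, J v⁆) ∧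
      J ∘ₗ J = -LinearMap.id) ∧ Even (Module.finrank ℝ V) := by
  classical
  -- powers of f commute with the bracket
  have hpow : ∀ (n : ℕ) (X : L) (v : V), (f ^ n) ⁅X, v⁆ = ⁅X, (f ^ n) v⁆ := by
    intro n
    induction n with
    | zero => intro X v; simp
    | succ n ih =>
      intro X v
      rw [pow_succ, Module.End.mul_apply, Module.End.mul_apply, hf, ih]
  -- polynomials in f commute with the bracket
  have hcomm : ∀ (p : ℝ[X]) (X : L) (v : V),
      (Polynomial.aeval f p) ⁅X, v⁆ = ⁅X, (Polynomial.aeval f p) v⁆ := by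
    intro p
    induction p using Polynomial.induction_on' with
    | add p q hp hq =>
      intro X v
      simp [map_add, LinearMap.add_apply, hp, hq, lie_add]
    | monomial n c =>
      intro X v
      simp [Polynomial.aeval_monomial, Algebra.algebraMap_eq_smul_one,
        LinearMap.smul_apply, hpow, lie_smul, Module.End.mul_apply]
  have hfi : IsIntegral ℝ f := Algebra.IsIntegral.isIntegral f
  set μ := minpoly ℝ f with hμdef
  have hμ0 : μ ≠ 0 := minpoly.ne_zero hfi
  have hμmonic : μ.Monic := minpoly.monic hfi
  -- μ is irreducible: take an irreducible factor g, show aeval f g = 0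
  obtain ⟨g, hg_irr, hg_dvd⟩ :=
    WfDvdMonoid.exists_irreducible_factor (minpoly.not_isUnit ℝ f) hμ0
  obtain ⟨q, hq⟩ := hg_dvd
  have hg0 : g ≠ 0 := hg_irr.ne_zero
  have hq0 : q ≠ 0 := by rintro rfl; simp at hq; exact hμ0 hq
  have hgq : Polynomial.aeval f g * Polynomial.aeval f q = 0 := by
    rw [← map_mul, ← hq, minpoly.aeval]
  have hqne : Polynomial.aeval f q ≠ 0 := by
    intro h0
    have hd : μ ∣ q := minpoly.dvd ℝ f h0
    have h1 : μ.natDegree ≤ q.natDegree := Polynomial.natDegree_le_of_dvd hd hq0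
    have h2 : μ.natDegree = g.natDegree + q.natDegree := by
      rw [hμdef, hq, Polynomial.natDegree_mul hg0 hq0]
    have h3 : 0 < g.natDegree := hg_irr.natDegree_pos
    omega
  -- kernel of aeval f g is invariant
  have hker := hirr (LinearMap.ker (Polynomial.aeval f g)) (by
    intro X v hv
    rw [LinearMap.mem_ker] at hv ⊢
    rw [hcomm, hv, lie_zero])
  have hkerne : LinearMap.ker (Polynomial.aeval f g) ≠ ⊥ := by
    obtain ⟨v, hv⟩ : ∃ v, Polynomial.aeval f q v ≠ 0 := by
      by_contra h
      push_neg at h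
      exact hqne (LinearMap.ext fun v => h v)
    intro hbot
    have : Polynomial.aeval f g (Polynomial.aeval f q v) = 0 := by
      rw [← Module.End.mul_apply, hgq, LinearMap.zero_apply]
    rw [← LinearMap.mem_ker, hbot, Submodule.mem_bot] at this
    exact hv this
  have hgzero : Polynomial.aeval f g = 0 := by
    rcases hker with h | h
    · exact absurd h hkerne
    · exact LinearMap.ker_eq_top.mp h
  have hμdvdg : μ ∣ g := minpoly.dvd ℝ f hgzero
  have hassoc : Associated g μ := associated_of_dvd_dvd ⟨q, hq⟩ hμdvdg
  have hμirr : Irreducible μ := hassoc.irreducible hg_irr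
  -- degree of μ is 1 or 2
  have hdeg2 : μ.natDegree ≤ 2 := hμirr.natDegree_le_two
  have hdeg1 : 0 < μ.natDegree := minpoly.natDegree_pos hfi
  have hdegne1 : μ.natDegree ≠ 1 := by
    intro h1
    have := hμmonic.eq_X_add_C h1
    apply hf_nonscalar (-(μ.coeff 0))
    have h0 : Polynomial.aeval f μ = 0 := minpoly.aeval ℝ f
    rw [this] at h0
    simp only [map_add, Polynomial.aeval_X, Polynomial.aeval_C,
      Algebra.algebraMap_eq_smul_one] at h0
    have : f = -((μ.coeff 0) • (1 : Module.End ℝ V)) := by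
      rw [eq_neg_iff_add_eq_zero]; exact h0
    rw [this]
    ext v
    simp
  have hdeg : μ.natDegree = 2 := by omega
  set a := μ.coeff 1 with ha
  set b := μ.coeff 0 with hb
  -- f * f = -(a • f) - b • 1
  have hsum : Polynomial.aeval f μ =
      b • (1 : Module.End ℝ V) + a • f + f ^ 2 := by
    rw [Polynomial.aeval_eq_sum_range (p := μ) f, hdeg]
    rw [Finset.sum_range_succ, Finset.sum_range_succ, Finset.sum_range_one]
    have hc2 : μ.coeff 2 = 1 := by
      have := hμmonic.leadingCoeff
      rwa [Polynomial.leadingCoeff, hdeg] at this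
    simp [hc2, ← ha, ← hb]
  have hff : f * f = -(a • f) - b • (1 : Module.End ℝ V) := by
    have h0 : Polynomial.aeval f μ = 0 := minpoly.aeval ℝ f
    rw [hsum] at h0
    rw [← sq]
    linear_combination (norm := module) h0
  -- μ has no real root
  have hnoroot : ∀ x : ℝ, ¬ μ.IsRoot x := by
    intro x hx
    obtain ⟨h, hh⟩ := Polynomial.dvd_iff_isRoot.mpr hx
    rcases hμirr.isUnit_or_isUnit hh with hu | hu
    · exact Polynomial.not_isUnit_X_sub_C x hu
    · have hhne : h ≠ 0 := by rintro rfl; simp at hh; exact hμ0 hh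
      have : h.natDegree = 0 := Polynomial.natDegree_eq_zero_of_isUnit hu
      have h2 : μ.natDegree = (X - C x).natDegree + h.natDegree :=
        by rw [hh, Polynomial.natDegree_mul (Polynomial.X_sub_C_ne_zero x) hhne]
      rw [Polynomial.natDegree_X_sub_C, this, hdeg] at h2
      omega
  -- evaluation formula
  have heval : ∀ x : ℝ, μ.eval x = b + a * x + x ^ 2 := by
    intro x
    have := Polynomial.aeval_eq_sum_range (p := μ) (x : ℝ)
    rw [hdeg] at this
    rw [show μ.eval x = Polynomial.aeval x μ from (Polynomial.aeval_def x μ ▸ by simp [Polynomial.aeval_def, Polynomial.eval₂_eq_eval_map]), this]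
    rw [Finset.sum_range_succ, Finset.sum_range_succ, Finset.sum_range_one]
    have hc2 : μ.coeff 2 = 1 := by
      have := hμmonic.leadingCoeff
      rwa [Polynomial.leadingCoeff, hdeg] at this
    simp [hc2, ← ha, ← hb]
  -- discriminant negative
  have hdisc : a ^ 2 - 4 * b < 0 := by
    by_contra h
    push_neg at h
    have hs : Real.sqrt (a ^ 2 - 4 * b) ^ 2 = a ^ 2 - 4 * b := Real.sq_sqrt h
    apply hnoroot ((-a + Real.sqrt (a ^ 2 - 4 * b)) / 2)
    unfold Polynomial.IsRoot
    rw [heval]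
    nlinarith [hs]
  set d := Real.sqrt (4 * b - a ^ 2) with hd
  have hd2 : d ^ 2 = 4 * b - a ^ 2 := Real.sq_sqrt (by linarith)
  have hdpos : 0 < d := Real.sqrt_pos.mpr (by linarith)
  have hdne : d ≠ 0 := ne_of_gt hdpos
  set J : Module.End ℝ V := d⁻¹ • ((2 : ℝ) • f + a • 1) with hJ
  have hJcomm : ∀ (X : L) (v : V), J ⁅X, v⁆ = ⁅X, J v⁆ := by
    intro X v
    simp [hJ, LinearMap.smul_apply, LinearMap.add_apply, hf, lie_smul, lie_add, smul_add]
  have hJJ : J * J = -1 := by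
    rw [hJ]
    have expand : (d⁻¹ • ((2 : ℝ) • f + a • 1)) * (d⁻¹ • ((2 : ℝ) • f + a • 1))
        = (d⁻¹ * d⁻¹) • ((4 : ℝ) • (f * f) + (4 * a) • f + (a ^ 2) • 1) := by
      simp only [smul_mul_assoc, mul_smul_comm, mul_add, add_mul, smul_smul,
        mul_one, one_mul, smul_add]
      module
    rw [expand, hff]
    have hscal : (d⁻¹ * d⁻¹) * (a ^ 2 - 4 * b) = -1 := by
      field_simp
      nlinarith [hd2]
    have : (4 : ℝ) • (-(a • f) - b • (1 : Module.End ℝ V)) + (4 * a) • f + (a ^ 2) • 1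
        = (a ^ 2 - 4 * b) • (1 : Module.End ℝ V) := by module
    rw [this, smul_smul, hscal, neg_smul, one_smul]
  refine ⟨⟨J, hJcomm, ?_⟩, ?_⟩
  · rw [← Module.End.mul_eq_comp, hJJ]
    rfl
  · -- determinant argument
    have hdet : LinearMap.det J * LinearMap.det J = (-1 : ℝ) ^ Module.finrank ℝ V := by
      rw [← LinearMap.det_comp, ← Module.End.mul_eq_comp, hJJ]
      have : (-1 : Module.End ℝ V) = (-1 : ℝ) • (LinearMap.id : V →ₗ[ℝ] V) := by
        ext v; simp
      rw [this, LinearMap.det_smul, LinearMap.det_id, mul_one]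
    rw [← neg_one_pow_eq_one_iff_even (R := ℝ) (by norm_num)]
    rcases neg_one_pow_eq_or ℝ (Module.finrank ℝ V) with h | h
    · exact h
    · exfalso
      rw [h] at hdet
      nlinarith [hdet]
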